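/- Let 0 < θ < 1 and 2 ≤ x ≤ θ + 1/θ. Then the function g(u) := −(1/2)·θxu − (θ²/4)·(1−u)² − (1/2)·log(1−u) attains its minimum over [0,1) at u = 0: for every u ∈ [0,1), g(u) ≥ g(0). -/

import Mathlib

/-!
Since `θx ≤ θ² + 1` and `θ² ≤ 1`, the increment `g(u) - g(0)` is bounded below by
`-(u + u²/2)/2 - log(1 - u)/2`, which is nonnegative because `u + u²/2` is a partial sum of the
series `-log(1 - u) = ∑ uⁿ⁺¹/(n + 1)` with nonnegative terms.
-/

noncomputable section

/-- The `u`-dependent part of the large-deviation rate function in the regime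
`θ(1-u) ≤ 1`: `g(u) = -(1/2)θxu - (θ²/4)(1-u)² - (1/2)log(1-u)`. -/
def gfun (θ x u : ℝ) : ℝ :=
  -(1 / 2) * (θ * x * u) - θ ^ 2 / 4 * (1 - u) ^ 2 - (1 / 2) * Real.log (1 - u)

/-- `u_θ = 1 - (θx - √(θ²x² - 4θ²))/(2θ²)`, solving `θ²(1-u)² - θx(1-u) + 1 = 0`. -/
def uTheta (θ x : ℝ) : ℝ :=
  1 - (θ * x - Real.sqrt (θ ^ 2 * x ^ 2 - 4 * θ ^ 2)) / (2 * θ ^ 2)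

lemma Real.add_sq_div_two_le_neg_log_one_sub {s : ℝ} (hs0 : 0 ≤ s) (hs1 : s < 1) :
    s + s ^ 2 / 2 ≤ -Real.log (1 - s) := by
  have hsum := Real.hasSum_pow_div_log_of_abs_lt_one (abs_lt.2 ⟨by linarith, hs1⟩)
  have := sum_le_hasSum (Finset.range 2) (fun n _ => by positivity) hsum
  norm_num [Finset.sum_range_succ] at this
  linarith

lemma gfun_zero_le_gfun {θ x u : ℝ} (hθ : θ ^ 2 ≤ 1) (hθx : θ * x ≤ θ ^ 2 + 1)
    (hu : u ∈ Set.Ico (0 : ℝ) 1) : gfun θ x 0 ≤ gfun θ x u := by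
  have hlog := Real.add_sq_div_two_le_neg_log_one_sub hu.1 hu.2
  have hlin : θ * x * u ≤ (θ ^ 2 + 1) * u := mul_le_mul_of_nonneg_right hθx hu.1
  have hquad : θ ^ 2 * u ^ 2 ≤ u ^ 2 := mul_le_of_le_one_left (sq_nonneg u) hθ
  simp only [gfun, sub_zero, mul_zero, Real.log_one]
  linarith

theorem gfun_min_at_zero_general (θ x : ℝ) (hθ0 : 0 < θ) (hθ1 : θ < 1)
    (hx : x ≤ θ + 1 / θ) :
    ∀ u ∈ Set.Ico (0 : ℝ) 1, gfun θ x 0 ≤ gfun θ x u := by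
  have hθ : θ ^ 2 ≤ 1 := by nlinarith
  have hθx : θ * x ≤ θ ^ 2 + 1 :=
    calc θ * x ≤ θ * (θ + 1 / θ) := mul_le_mul_of_nonneg_left hx hθ0.le
      _ = θ ^ 2 + 1 := by field_simp
  exact fun u hu => gfun_zero_le_gfun hθ hθx hu

/-- For `0 < θ < 1` and `2 ≤ x ≤ θ + 1/θ`, the function `g` attains its minimum over
`[0,1)` at `u = 0`. -/
theorem gfun_min_at_zero (θ x : ℝ) (hθ0 : 0 < θ) (hθ1 : θ < 1) (hx2 : 2 ≤ x)
    (hx : x ≤ θ + 1 / θ) :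
    ∀ u ∈ Set.Ico (0 : ℝ) 1, gfun θ x 0 ≤ gfun θ x u :=
  gfun_min_at_zero_general θ x hθ0 hθ1 hx

end
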